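/- arXiv:1206.0320 — 3 statements merged into one kernel-verified Lean document; each statement's English description precedes it below -/
import Mathlib

section
/- For every n and every nonnegative integer m, the number of permutations in Av_n(123) containing exactly m occurrences of the pattern 231 equals the number of permutations in Av_n(123) containing exactly m occurrences of the pattern 312; the same equidistribution holds in Av_n(132). Consequently ν_231(Av_n(123)) = ν_312(Av_n(123)) and ν_231(Av_n(132)) = ν_312(Av_n(132)). -/
open Finset

/-- The number of occurrences of the pattern `q` (a permutation of length `k`)
in the permutation `p` (of length `n`): the number of strictly increasing index
sequences along which `p` is order-isomorphic to `q`. -/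
def numOcc {k n : ℕ} (q : Equiv.Perm (Fin k)) (p : Equiv.Perm (Fin n)) : ℕ :=
  ((Finset.univ : Finset (Fin k → Fin n)).filter (fun f =>
    (∀ i j : Fin k, i < j → f i < f j) ∧
    (∀ i j : Fin k, q i < q j ↔ p (f i) < p (f j)))).card

/-- `Av n q` : the set of permutations of length `n` avoiding the pattern `q`. -/
def Av (n : ℕ) {k : ℕ} (q : Equiv.Perm (Fin k)) : Finset (Equiv.Perm (Fin n)) :=
  Finset.univ.filter (fun p => numOcc q p = 0)

/-- Total number of occurrences of `q` over a finite set of permutations. -/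
def nu {k n : ℕ} (q : Equiv.Perm (Fin k)) (C : Finset (Equiv.Perm (Fin n))) : ℕ :=
  ∑ p ∈ C, numOcc q p

noncomputable def p12 : Equiv.Perm (Fin 2) := Equiv.ofBijective ![0,1] (by decide)
noncomputable def p21 : Equiv.Perm (Fin 2) := Equiv.ofBijective ![1,0] (by decide)
noncomputable def p123 : Equiv.Perm (Fin 3) := Equiv.ofBijective ![0,1,2] (by decide)
noncomputable def p132 : Equiv.Perm (Fin 3) := Equiv.ofBijective ![0,2,1] (by decide)
noncomputable def p213 : Equiv.Perm (Fin 3) := Equiv.ofBijective ![1,0,2] (by decide)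
noncomputable def p231 : Equiv.Perm (Fin 3) := Equiv.ofBijective ![1,2,0] (by decide)
noncomputable def p312 : Equiv.Perm (Fin 3) := Equiv.ofBijective ![2,0,1] (by decide)
noncomputable def p321 : Equiv.Perm (Fin 3) := Equiv.ofBijective ![2,1,0] (by decide)
noncomputable def p2413 : Equiv.Perm (Fin 4) := Equiv.ofBijective ![1,3,0,2] (by decide)

/-!
Inversion `p ↦ p⁻¹` carries occurrences of `q` in `p` to occurrences of `q⁻¹` in `p⁻¹`
(an occurrence is a set of points of the graph of `p`, and inversion reflects the graph in
the diagonal). Since `123` and `132` are involutions while `231⁻¹ = 312`, inversion maps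
`Av_n(123)` and `Av_n(132)` to themselves and exchanges the numbers of `231` and `312`
occurrences.
-/

def IsOccurrence {k n : ℕ} (q : Equiv.Perm (Fin k)) (p : Equiv.Perm (Fin n))
    (f : Fin k → Fin n) : Prop :=
  (∀ i j : Fin k, i < j → f i < f j) ∧ (∀ i j : Fin k, q i < q j ↔ p (f i) < p (f j))

instance {k n : ℕ} (q : Equiv.Perm (Fin k)) (p : Equiv.Perm (Fin n)) :
    DecidablePred (IsOccurrence q p) :=
  fun _ => inferInstanceAs (Decidable (_ ∧ _))

lemma numOcc_eq_card_isOccurrence {k n : ℕ} (q : Equiv.Perm (Fin k))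
    (p : Equiv.Perm (Fin n)) :
    numOcc q p = #{f | IsOccurrence q p f} :=
  rfl

lemma IsOccurrence.inv {k n : ℕ} {q : Equiv.Perm (Fin k)} {p : Equiv.Perm (Fin n)}
    {f : Fin k → Fin n} (hf : IsOccurrence q p f) :
    IsOccurrence q⁻¹ p⁻¹ (p ∘ f ∘ ⇑q⁻¹) := by
  obtain ⟨hmono, hiso⟩ := hf
  have hf : StrictMono f := fun i j h => hmono i j h
  refine ⟨fun i j hij => ?_, fun i j => ?_⟩
  · simpa [← hiso] using hij
  · simpa using hf.lt_iff_lt.symm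

lemma isOccurrence_inv_inv_iff {k n : ℕ} (q : Equiv.Perm (Fin k)) (p : Equiv.Perm (Fin n))
    (f : Fin k → Fin n) :
    IsOccurrence q⁻¹ p⁻¹ f ↔ IsOccurrence q p (⇑p⁻¹ ∘ f ∘ q) := by
  refine ⟨fun hf => ?_, fun hf => ?_⟩
  · simpa using hf.inv
  · convert hf.inv using 1
    ext i
    simp

lemma numOcc_inv_inv {k n : ℕ} (q : Equiv.Perm (Fin k)) (p : Equiv.Perm (Fin n)) :
    numOcc q⁻¹ p⁻¹ = numOcc q p := by
  simp only [numOcc_eq_card_isOccurrence]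
  exact card_equiv (Equiv.arrowCongr q⁻¹ p⁻¹) fun f => by
    rw [mem_filter_univ, mem_filter_univ, isOccurrence_inv_inv_iff]
    rfl

lemma inv_mem_Av_inv_iff {k n : ℕ} (q : Equiv.Perm (Fin k)) (p : Equiv.Perm (Fin n)) :
    p⁻¹ ∈ Av n q⁻¹ ↔ p ∈ Av n q := by
  simp [Av, numOcc_inv_inv]

lemma card_filter_Av_numOcc_eq_inv {k l : ℕ} (n : ℕ) (q : Equiv.Perm (Fin k))
    (r : Equiv.Perm (Fin l)) (m : ℕ) :
    #{p ∈ Av n q | numOcc r p = m} = #{p ∈ Av n q⁻¹ | numOcc r⁻¹ p = m} :=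
  card_equiv (Equiv.inv _) fun p => by simp [inv_mem_Av_inv_iff, numOcc_inv_inv]

lemma nu_Av_eq_inv {k l : ℕ} (n : ℕ) (q : Equiv.Perm (Fin k)) (r : Equiv.Perm (Fin l)) :
    nu r (Av n q) = nu r⁻¹ (Av n q⁻¹) :=
  sum_equiv (Equiv.inv _) (fun p => by simp [inv_mem_Av_inv_iff])
    fun p _ => by simp [numOcc_inv_inv]

lemma p123_inv : p123⁻¹ = p123 := inv_eq_of_mul_eq_one_right (by decide)

lemma p132_inv : p132⁻¹ = p132 := inv_eq_of_mul_eq_one_right (by decide)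

lemma p231_inv : p231⁻¹ = p312 := inv_eq_of_mul_eq_one_right (by decide)

/-- In both `Av_n(123)` and `Av_n(132)`, the statistics counting
occurrences of `231` and of `312` are equidistributed; consequently the total
numbers of `231` and `312` patterns agree in each class. -/
theorem stmt_1 (n m : ℕ) :
    ((Av n p123).filter (fun p => numOcc p231 p = m)).card =
      ((Av n p123).filter (fun p => numOcc p312 p = m)).card ∧
    ((Av n p132).filter (fun p => numOcc p231 p = m)).card =
      ((Av n p132).filter (fun p => numOcc p312 p = m)).card ∧
    nu p231 (Av n p123) = nu p312 (Av n p123) ∧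
    nu p231 (Av n p132) = nu p312 (Av n p132) := by
  have h123 := card_filter_Av_numOcc_eq_inv n p123 p231 m
  have h132 := card_filter_Av_numOcc_eq_inv n p132 p231 m
  have hnu123 := nu_Av_eq_inv n p123 p231
  have hnu132 := nu_Av_eq_inv n p132 p231
  rw [p123_inv, p231_inv] at h123 hnu123
  rw [p132_inv, p231_inv] at h132 hnu132
  exact ⟨h123, h132, hnu123, hnu132⟩
end

section
/- For every n ≥ 1, the total number of occurrences of the pattern 12 over all 123-avoiding permutations of length n satisfies ν_12(Av_n(123)) + binom(2n−1, n) = 4^{n−1}, i.e. ν_12(Av_n(123)) = 4^{n−1} − binom(2n−1, n). -/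
open Finset

/-!
Inserting a new maximum into `p ∈ Av_n(123)` at position `m` gives a 123-avoider exactly when
the first `m` entries of `p` decrease, and it creates exactly `m` new occurrences of `12`; every
`q ∈ Av_{n+1}(123)` arises once this way. Hence the number `A(n,t)` of 123-avoiders whose first
`t` entries decrease, and the total number `B(n,t)` of occurrences of `12` in them, satisfy
  `A(n+1,t) = A(n+1,t+1) + A(n,t-1)`,
  `B(n+1,t) = B(n+1,t+1) + B(n,t-1) + t A(n,t)`  (`1 ≤ t ≤ n`),
with `A(n,n) = 1`, `B(n,n) = 0` and `A(n,0) = A(n,1)`, `B(n,0) = B(n,1)`. They are solved by the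
ballot numbers `A(n,t) = C(2n-t,n) - C(2n-t,n+1)` and, with `M = 2n-t-1`, by
`B(n,t) = (C(t,2) - 1) C(M,n) + (t+1) (2^M - ∑_{k<n} C(M,k))`. At `t = 1` the halfway identity
`∑_{k≤m} C(2m+1,k) = 4^m` turns `B(n,1)` into `4^(n-1) - C(2n-1,n)`.
-/

open Equiv

section

variable {n : ℕ}

lemma p12_apply (i : Fin 2) : p12 i = i := by
  fin_cases i <;> rfl

lemma p123_apply (i : Fin 3) : p123 i = i := by
  fin_cases i <;> rfl

lemma numOcc_eq_card_of_forall_apply_eq {k : ℕ} {q : Perm (Fin k)} (hq : ∀ i, q i = i)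
    (p : Perm (Fin n)) :
    numOcc q p = #{f : Fin k → Fin n | StrictMono f ∧ StrictMono (p ∘ f)} := by
  unfold numOcc
  congr 1
  refine filter_congr fun f _ => ?_
  simp only [hq]
  exact and_congr_right fun _ => ⟨fun h a b hab => (h a b).1 hab,
    fun h a b => (h.lt_iff_lt (a := a) (b := b)).symm⟩

lemma numOcc_p12 (p : Perm (Fin n)) :
    numOcc p12 p = #{x : Fin n × Fin n | x.1 < x.2 ∧ p x.1 < p x.2} := by
  rw [numOcc_eq_card_of_forall_apply_eq p12_apply]
  refine card_nbij' (fun f => (f 0, f 1)) (fun x => ![x.1, x.2])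
    (fun f => by simp [Fin.strictMono_iff_lt_succ]) (fun x => by simp [Fin.strictMono_iff_lt_succ])
    (fun f _ => by ext i; fin_cases i <;> rfl) (fun x _ => rfl)

lemma numOcc_p123_eq_zero_iff (p : Perm (Fin n)) :
    numOcc p123 p = 0 ↔ ∀ a b c : Fin n, a < b → b < c → p a < p b → ¬ p b < p c := by
  rw [numOcc_eq_card_of_forall_apply_eq p123_apply, card_eq_zero, filter_eq_empty_iff]
  have h01 : (0 : Fin 3) < 1 := by decide
  have h12 : (1 : Fin 3) < 2 := by decide
  refine ⟨fun h a b c hab hbc hpab hpbc => h (mem_univ ![a, b, c]) ?_,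
    fun h f _ ⟨hf, hpf⟩ => h _ _ _ (hf h01) (hf h12) (hpf h01) (hpf h12)⟩
  simp only [Fin.strictMono_iff_lt_succ, Fin.forall_fin_succ, Function.comp_apply]
  simp_all

noncomputable def insertMax (m : Fin (n + 1)) (p : Perm (Fin n)) : Perm (Fin (n + 1)) :=
  (finSuccEquiv' m).trans (p.optionCongr.trans (finSuccEquiv' (Fin.last n)).symm)

@[simp] lemma insertMax_apply_self (m : Fin (n + 1)) (p : Perm (Fin n)) :
    insertMax m p m = Fin.last n := by
  simp [insertMax]

@[simp] lemma insertMax_apply_succAbove (m : Fin (n + 1)) (p : Perm (Fin n)) (i : Fin n) :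
    insertMax m p (m.succAbove i) = (p i).castSucc := by
  simp [insertMax, Fin.succAbove_last]

lemma insertMax_injective :
    Function.Injective fun x : Fin (n + 1) × Perm (Fin n) => insertMax x.1 x.2 := by
  rintro ⟨m, p⟩ ⟨m', p'⟩ h
  simp only at h
  have hm : m = m' := by
    by_contra hne
    obtain ⟨i, rfl⟩ := Fin.exists_succAbove_eq hne
    have := congrArg (· (m'.succAbove i)) h
    simp only [insertMax_apply_self, insertMax_apply_succAbove] at this
    exact (Fin.castSucc_lt_last _).ne this.symm
  subst hm
  refine Prod.ext rfl (Equiv.ext fun i => Fin.castSucc_injective _ ?_)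
  simpa using congrArg (· (m.succAbove i)) h

noncomputable def insertMaxEquiv (n : ℕ) : Fin (n + 1) × Perm (Fin n) ≃ Perm (Fin (n + 1)) :=
  Equiv.ofBijective _ <| (Fintype.bijective_iff_injective_and_card _).2
    ⟨insertMax_injective, by simp [Fintype.card_perm, Nat.factorial_succ]⟩

lemma Fin.card_filter_castSucc_lt (m : Fin (n + 1)) : #{i : Fin n | i.castSucc < m} = m := by
  simp only [Fin.lt_def, Fin.val_castSucc]
  rw [Fin.card_filter_val_lt, min_eq_right (Nat.lt_succ_iff.mp m.isLt)]

lemma numOcc_p12_insertMax (m : Fin (n + 1)) (p : Perm (Fin n)) :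
    numOcc p12 (insertMax m p) = numOcc p12 p + m := by
  simp only [numOcc_p12, card_filter, Fintype.sum_prod_type]
  rw [Fin.sum_univ_succAbove _ m]
  simp only [Fin.sum_univ_succAbove _ m]
  simp [Fin.succAbove_lt_iff_castSucc_lt, not_lt.2 (Fin.le_last _), sum_add_distrib, add_comm,
    Fin.card_filter_castSucc_lt]

def DecreasingUpTo (p : Perm (Fin n)) (t : ℕ) : Prop :=
  ∀ i j : Fin n, i < j → (j : ℕ) < t → p j < p i

instance (p : Perm (Fin n)) (t : ℕ) : Decidable (DecreasingUpTo p t) := by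
  unfold DecreasingUpTo; infer_instance

lemma numOcc_p123_insertMax_eq_zero_iff (m : Fin (n + 1)) (p : Perm (Fin n)) :
    numOcc p123 (insertMax m p) = 0 ↔ numOcc p123 p = 0 ∧ DecreasingUpTo p m := by
  rw [numOcc_p123_eq_zero_iff, numOcc_p123_eq_zero_iff]
  simp only [Fin.forall_iff_succAbove m]
  simp [Fin.succAbove_lt_iff_castSucc_lt, Fin.lt_succAbove_iff_le_castSucc,
    not_lt.2 (Fin.le_last _), Fin.castSucc_lt_last]
  exact ⟨fun h => ⟨fun a b c => (h a b).2 c, fun i j hij hj =>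
      ((h i j).1 hij hj).lt_of_ne (p.injective.ne hij.ne')⟩,
    fun ⟨h, hdec⟩ i j => ⟨fun hij hj => (hdec i j hij hj).le, h i j⟩⟩

lemma DecreasingUpTo.mono {p : Perm (Fin n)} {s t : ℕ} (h : DecreasingUpTo p t) (hst : s ≤ t) :
    DecreasingUpTo p s :=
  fun i j hij hj => h i j hij (hj.trans_le hst)

lemma decreasingUpTo_zero (p : Perm (Fin n)) : DecreasingUpTo p 0 :=
  fun _ _ _ hj => absurd hj (Nat.not_lt_zero _)

lemma decreasingUpTo_one (p : Perm (Fin n)) : DecreasingUpTo p 1 := by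
  intro i j hij hj
  have : (i : ℕ) < j := hij
  omega

lemma decreasingUpTo_insertMax_zero (p : Perm (Fin n)) (t : ℕ) :
    DecreasingUpTo (insertMax 0 p) (t + 1) ↔ DecreasingUpTo p t := by
  simp only [DecreasingUpTo, Fin.forall_iff_succAbove 0, insertMax_apply_succAbove,
    insertMax_apply_self]
  simp [Fin.castSucc_lt_last]

lemma decreasingUpTo_insertMax_iff {m : Fin (n + 1)} {p : Perm (Fin n)} (hm : m ≠ 0)
    (hp : DecreasingUpTo p m) (t : ℕ) : DecreasingUpTo (insertMax m p) t ↔ t ≤ m := by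
  refine ⟨fun h => not_lt.1 fun hmt => ?_, fun ht i j hij hj => ?_⟩
  · obtain ⟨k, rfl⟩ := Fin.exists_succ_eq.2 hm
    have := h k.castSucc k.succ Fin.castSucc_lt_succ hmt
    rw [insertMax_apply_self] at this
    exact (Fin.le_last _).not_gt this
  · have castSucc_eq (k : Fin (n + 1)) (hk : (k : ℕ) < m) :
        ∃ k' : Fin n, m.succAbove k' = k ∧ (k' : ℕ) = k := by
      obtain ⟨k', rfl⟩ := Fin.exists_castSucc_eq.2 (Fin.ne_last_of_lt (Fin.lt_def.2 hk))
      exact ⟨k', Fin.succAbove_of_castSucc_lt _ _ hk, rfl⟩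
    obtain ⟨i', rfl, -⟩ := castSucc_eq i (by omega)
    obtain ⟨j', rfl, hj'⟩ := castSucc_eq j (by omega)
    rw [insertMax_apply_succAbove, insertMax_apply_succAbove, Fin.castSucc_lt_castSucc_iff]
    exact hp i' j' (Fin.succAbove_lt_succAbove_iff.1 hij) (by omega)

def activeSites (p : Perm (Fin n)) : Finset (Fin (n + 1)) :=
  {m | DecreasingUpTo p m}

lemma sum_Av_p123_succ {M : Type*} [AddCommMonoid M] (g : Perm (Fin (n + 1)) → M) :
    ∑ q ∈ Av (n + 1) p123, g q =
      ∑ p ∈ Av n p123, ∑ m ∈ activeSites p, g (insertMax m p) := by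
  rw [Av, sum_filter, ← (insertMaxEquiv n).sum_comp, Fintype.sum_prod_type, sum_comm, Av,
    sum_filter]
  refine sum_congr rfl fun p _ => ?_
  simp only [insertMaxEquiv, Equiv.ofBijective_apply, numOcc_p123_insertMax_eq_zero_iff, ite_and,
    activeSites, sum_filter]
  split_ifs <;> simp

-- `weightedCount 1 n t` and `weightedCount id n t` are the `A(n,t)` and `B(n,t)` of the header.
noncomputable def weightedCount (u : ℕ → ℕ) (n t : ℕ) : ℕ :=
  ∑ p ∈ Av n p123 with DecreasingUpTo p t, u (numOcc p12 p)

lemma weightedCount_eq_add (u : ℕ → ℕ) (n t : ℕ) :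
    weightedCount u n t = weightedCount u n (t + 1) +
      ∑ p ∈ Av n p123 with DecreasingUpTo p t ∧ ¬ DecreasingUpTo p (t + 1),
        u (numOcc p12 p) := by
  rw [weightedCount, weightedCount, ← sum_filter_add_sum_filter_not _ (DecreasingUpTo · (t + 1)),
    filter_filter, filter_filter]
  congr 2
  exact filter_congr fun p _ => ⟨And.right, fun h => ⟨h.mono t.le_succ, h⟩⟩

lemma sum_activeSites_ite (u : ℕ → ℕ) {s : ℕ} (hs : s < n) (p : Perm (Fin n)) :
    ∑ m ∈ activeSites p, (if DecreasingUpTo (insertMax m p) (s + 1) ∧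
        ¬ DecreasingUpTo (insertMax m p) (s + 2) then u (numOcc p12 (insertMax m p)) else 0) =
      (if DecreasingUpTo p s ∧ ¬ DecreasingUpTo p (s + 1) then u (numOcc p12 p) else 0) +
        if DecreasingUpTo p (s + 1) then u (numOcc p12 p + (s + 1)) else 0 := by
  have hs0 : (⟨s + 1, by omega⟩ : Fin (n + 1)) ≠ 0 := Fin.ne_of_val_ne (by simp)
  rw [activeSites, sum_filter, Fintype.sum_eq_add 0 _ hs0.symm]
  · congr 1
    · simp [decreasingUpTo_zero, decreasingUpTo_insertMax_zero, numOcc_p12_insertMax]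
    · by_cases hp : DecreasingUpTo p (s + 1)
      · simp [hp, decreasingUpTo_insertMax_iff hs0 hp, numOcc_p12_insertMax]
      · simp [hp]
  · rintro m ⟨hm0, hms⟩
    split_ifs with hp hm <;> try rfl
    rw [decreasingUpTo_insertMax_iff hm0 hp, decreasingUpTo_insertMax_iff hm0 hp] at hm
    exact absurd (Fin.ext (by simp; omega)) hms

lemma weightedCount_succ_add {u : ℕ → ℕ} {s : ℕ} (hs : s < n) :
    weightedCount u (n + 1) (s + 1) + weightedCount u n (s + 1) =
      weightedCount u (n + 1) (s + 2) + weightedCount u n s +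
        weightedCount (fun k => u (k + (s + 1))) n (s + 1) := by
  have hsucc : ∑ q ∈ Av (n + 1) p123 with DecreasingUpTo q (s + 1) ∧
      ¬ DecreasingUpTo q (s + 2), u (numOcc p12 q) =
      (∑ p ∈ Av n p123 with DecreasingUpTo p s ∧ ¬ DecreasingUpTo p (s + 1),
        u (numOcc p12 p)) +
        weightedCount (fun k => u (k + (s + 1))) n (s + 1) := by
    rw [sum_filter, sum_Av_p123_succ, weightedCount, sum_filter, sum_filter, ← sum_add_distrib]
    exact sum_congr rfl fun p _ => sum_activeSites_ite u hs p
  have := weightedCount_eq_add u (n + 1) (s + 1)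
  simp only [Nat.add_assoc, Nat.reduceAdd] at this
  have := weightedCount_eq_add u n s
  omega

lemma eq_revPerm_of_decreasingUpTo {p : Perm (Fin n)} (h : DecreasingUpTo p n) :
    p = Fin.revPerm := by
  have hmono : StrictMono fun i => p (Fin.rev i) :=
    fun a b hab => h _ _ (Fin.rev_lt_rev.2 hab) (Fin.rev a).isLt
  ext j
  simpa using congrArg Fin.val (hmono.apply_eq (x := j.rev))

lemma weightedCount_self (u : ℕ → ℕ) (n : ℕ) : weightedCount u n n = u 0 := by
  have hrev : ({p ∈ Av n p123 | DecreasingUpTo p n} : Finset _) = {Fin.revPerm} := by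
    ext p
    simp only [Av, mem_filter, mem_univ, true_and, mem_singleton, numOcc_p123_eq_zero_iff]
    refine ⟨fun h => eq_revPerm_of_decreasingUpTo h.2, ?_⟩
    rintro rfl
    refine ⟨fun a b c hab _ hrab _ => ?_, fun i j hij _ => by simpa using hij⟩
    simp only [Fin.revPerm_apply, Fin.rev_lt_rev] at hrab
    exact hab.asymm hrab
  have hocc : numOcc p12 (Fin.revPerm : Perm (Fin n)) = 0 := by
    simpa [numOcc_p12, filter_eq_empty_iff] using fun _ _ => le_of_lt
  rw [weightedCount, hrev, sum_singleton, hocc]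

lemma weightedCount_zero (u : ℕ → ℕ) (n : ℕ) :
    weightedCount u n 0 = weightedCount u n 1 := by
  simp only [weightedCount, decreasingUpTo_zero, decreasingUpTo_one]

def lowerChooseSum (M a : ℕ) : ℕ := ∑ k ∈ range a, M.choose k

lemma lowerChooseSum_succ_succ (M a : ℕ) :
    lowerChooseSum (M + 1) (a + 1) = lowerChooseSum M (a + 1) + lowerChooseSum M a := by
  unfold lowerChooseSum
  induction a with
  | zero => simp
  | succ a ih =>
    rw [sum_range_succ, ih, Nat.choose_succ_succ', sum_range_succ _ (a + 1), sum_range_succ _ a]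
    ring

lemma lowerChooseSum_succ (M a : ℕ) :
    lowerChooseSum M (a + 1) = lowerChooseSum M a + M.choose a :=
  sum_range_succ _ _

def countFormula (n t : ℕ) : ℤ := (2 * n - t).choose n - (2 * n - t).choose (n + 1)

def totalFormula (n t : ℕ) : ℤ :=
  ((t.choose 2 : ℤ) - 1) * (2 * n - t - 1).choose n +
    (t + 1) * (2 ^ (2 * n - t - 1) - lowerChooseSum (2 * n - t - 1) n)

lemma countFormula_succ {n s : ℕ} (hs : s < n) :
    countFormula (n + 1) (s + 1) = countFormula (n + 1) (s + 2) + countFormula n s := by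
  obtain ⟨M, hM⟩ : ∃ M, 2 * n - s = M + 1 := ⟨2 * n - s - 1, by omega⟩
  simp only [countFormula, show 2 * (n + 1) - (s + 1) = M + 2 by omega,
    show 2 * (n + 1) - (s + 2) = M + 1 by omega, hM, Nat.choose_succ_succ' (M + 1)]
  push_cast
  ring

lemma totalFormula_succ {n s : ℕ} (hs : s < n) :
    totalFormula (n + 1) (s + 1) = totalFormula (n + 1) (s + 2) + totalFormula n s +
      (s + 1) * countFormula n (s + 1) := by
  obtain ⟨M, hM⟩ : ∃ M, 2 * n - s - 1 = M := ⟨_, rfl⟩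
  simp only [totalFormula, countFormula, show 2 * (n + 1) - (s + 1) - 1 = M + 1 by omega,
    show 2 * (n + 1) - (s + 2) - 1 = M by omega, show 2 * n - (s + 1) = M by omega, hM,
    Nat.choose_succ_succ' M, lowerChooseSum_succ_succ, lowerChooseSum_succ,
    Nat.choose_succ_succ' (s + 1), Nat.choose_succ_succ' s, Nat.choose_zero_right]
  push_cast [Nat.choose_one_right]
  ring

lemma countFormula_self (n : ℕ) : countFormula n n = 1 := by
  simp [countFormula, show 2 * n - n = n by omega]

lemma totalFormula_self (n : ℕ) : totalFormula (n + 1) (n + 1) = 0 := by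
  simp [totalFormula, show 2 * (n + 1) - (n + 1) - 1 = n by omega, lowerChooseSum,
    Nat.sum_range_choose]

lemma countFormula_zero (n : ℕ) : countFormula (n + 1) 0 = countFormula (n + 1) 1 := by
  simp only [countFormula, show 2 * (n + 1) - 0 = 2 * n + 1 + 1 by omega,
    show 2 * (n + 1) - 1 = 2 * n + 1 by omega, Nat.choose_succ_succ' (2 * n + 1),
    Nat.choose_symm_half]
  push_cast
  ring

lemma totalFormula_zero (n : ℕ) : totalFormula (n + 1) 0 = totalFormula (n + 1) 1 := by
  simp only [totalFormula, show 2 * (n + 1) - 0 - 1 = 2 * n + 1 by omega,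
    show 2 * (n + 1) - 1 - 1 = 2 * n by omega, Nat.choose_succ_succ' (2 * n),
    lowerChooseSum_succ_succ, lowerChooseSum_succ]
  push_cast [Nat.choose_zero_succ, Nat.choose_succ_self]
  ring

lemma totalFormula_succ_one (m : ℕ) :
    totalFormula (m + 1) 1 + (2 * m + 1).choose (m + 1) = 4 ^ m := by
  have halfway : (lowerChooseSum (2 * m + 1) (m + 1) : ℤ) = 4 ^ m := by
    exact_mod_cast Nat.sum_range_choose_halfway m
  simp only [totalFormula, show 2 * (m + 1) - 1 - 1 = 2 * m by omega, Nat.choose_succ_succ',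
    lowerChooseSum_succ_succ, lowerChooseSum_succ] at halfway ⊢
  push_cast [Nat.choose_zero_succ, pow_mul] at halfway ⊢
  linear_combination -halfway

lemma weightedCount_add_const (c n t : ℕ) :
    weightedCount (· + c) n t = weightedCount id n t + c * weightedCount 1 n t := by
  simp [weightedCount, sum_add_distrib, mul_comm]

lemma weightedCount_one_succ {s : ℕ} (hs : s < n) :
    weightedCount 1 (n + 1) (s + 1) = weightedCount 1 (n + 1) (s + 2) + weightedCount 1 n s := by
  have := weightedCount_succ_add (u := 1) hs
  have : weightedCount (fun k => (1 : ℕ → ℕ) (k + (s + 1))) n (s + 1) =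
    weightedCount 1 n (s + 1) := rfl
  omega

lemma weightedCount_id_succ {s : ℕ} (hs : s < n) :
    weightedCount id (n + 1) (s + 1) = weightedCount id (n + 1) (s + 2) + weightedCount id n s +
      (s + 1) * weightedCount 1 n (s + 1) := by
  have := weightedCount_succ_add (u := id) hs
  rw [show (fun k => id (k + (s + 1))) = (· + (s + 1)) from rfl, weightedCount_add_const] at this
  omega

theorem weightedCount_eq_formula {n t : ℕ} (hn : 1 ≤ n) (ht : t ≤ n) :
    (weightedCount 1 n t : ℤ) = countFormula n t ∧
      (weightedCount id n t : ℤ) = totalFormula n t := by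
  induction n generalizing t with
  | zero => omega
  | succ n ih =>
    induction ht using Nat.decreasingInduction with
    | self => simp [weightedCount_self, countFormula_self, totalFormula_self]
    | of_succ t ht hnext =>
      cases t with
      | zero =>
        rw [weightedCount_zero, weightedCount_zero, countFormula_zero, totalFormula_zero]
        exact hnext
      | succ s =>
        have hs : s < n := by omega
        obtain ⟨count_s, total_s⟩ := ih (by omega) hs.le
        obtain ⟨count_s1, -⟩ := ih (by omega) hs
        obtain ⟨count_next, total_next⟩ := hnext
        rw [weightedCount_one_succ hs, weightedCount_id_succ hs, countFormula_succ hs,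
          totalFormula_succ hs]
        push_cast
        exact ⟨by linear_combination count_next + count_s,
          by linear_combination total_next + total_s + ((s : ℤ) + 1) * count_s1⟩

end

/-- For `n ≥ 1`, `ν_12(Av_n(123)) = 4^(n-1) - binom(2n-1, n)`. -/
theorem stmt_4 (n : ℕ) (hn : 1 ≤ n) :
    nu p12 (Av n p123) + Nat.choose (2 * n - 1) n = 4 ^ (n - 1) := by
  obtain ⟨m, rfl⟩ : ∃ m, n = m + 1 := ⟨n - 1, by omega⟩
  have hnu : nu p12 (Av (m + 1) p123) = weightedCount id (m + 1) 1 := by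
    simp [weightedCount, nu, decreasingUpTo_one]
  have htotal := (weightedCount_eq_formula hn hn).2
  have hformula := totalFormula_succ_one m
  rw [hnu, show 2 * (m + 1) - 1 = 2 * m + 1 by omega, Nat.add_sub_cancel]
  zify
  linarith
end

section
/- For every n ≥ 2, in the class of 123-avoiding permutations of length n, 4·ν_132(Av_n(123)) + 2·ν_231(Av_n(123)) = (n−2)·ν_12(Av_n(123)). -/
open Finset

/- ===== auxiliary development ===== -/

/-- The occurrence set whose cardinality is `numOcc`. -/
def Occ {k n : ℕ} (q : Equiv.Perm (Fin k)) (p : Equiv.Perm (Fin n)) : Finset (Fin k → Fin n) :=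
  ((Finset.univ : Finset (Fin k → Fin n)).filter (fun f =>
    (∀ i j : Fin k, i < j → f i < f j) ∧
    (∀ i j : Fin k, q i < q j ↔ p (f i) < p (f j))))

lemma numOcc_eq_card_Occ {k n : ℕ} (q : Equiv.Perm (Fin k)) (p : Equiv.Perm (Fin n)) :
    numOcc q p = (Occ q p).card := rfl

def rc {m : ℕ} (q : Equiv.Perm (Fin m)) : Equiv.Perm (Fin m) :=
  Fin.revPerm.trans (q.trans Fin.revPerm)

lemma fin3_cases {i j : Fin 3} (h : i < j) :
    (i = 0 ∧ j = 1) ∨ (i = 0 ∧ j = 2) ∨ (i = 1 ∧ j = 2) := by revert i j; decide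

lemma fin2_cases (i j : Fin 2) :
    (i = 0 ∧ j = 0) ∨ (i = 0 ∧ j = 1) ∨ (i = 1 ∧ j = 0) ∨ (i = 1 ∧ j = 1) := by revert i j; decide

lemma perm3_unique (q q' : Equiv.Perm (Fin 3)) (h : ∀ i j, q i < q j ↔ q' i < q' j) :
    q = q' := by revert q q'; decide

/-- The pattern of `p ∘ g`. -/
noncomputable def pat {n : ℕ} (p : Equiv.Perm (Fin n)) (g : Fin 3 → Fin n) : Equiv.Perm (Fin 3) :=
  (Tuple.sort (fun i => p (g i)))⁻¹

lemma pat_spec {n : ℕ} (p : Equiv.Perm (Fin n)) (g : Fin 3 → Fin n)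
    (hg : Function.Injective g) (i j : Fin 3) :
    pat p g i < pat p g j ↔ p (g i) < p (g j) := by
  set v : Fin 3 → Fin n := fun i => p (g i) with hv
  have hvinj : Function.Injective v := fun a b h => hg (p.injective h)
  have hw : StrictMono (v ∘ (Tuple.sort v)) :=
    (Tuple.monotone_sort v).strictMono_of_injective (hvinj.comp (Tuple.sort v).injective)
  have h1 : ∀ t, v t = (v ∘ (Tuple.sort v)) ((Tuple.sort v)⁻¹ t) := by
    intro t; simp
  show (Tuple.sort v)⁻¹ i < (Tuple.sort v)⁻¹ j ↔ v i < v j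
  rw [h1 i, h1 j]
  exact (hw.lt_iff_lt).symm

lemma mem_Occ3 {n : ℕ} (p : Equiv.Perm (Fin n)) (q : Equiv.Perm (Fin 3)) (g : Fin 3 → Fin n) :
    g ∈ Occ q p ↔ ((∀ i j : Fin 3, i < j → g i < g j) ∧ pat p g = q) := by
  simp only [Occ, Finset.mem_filter, Finset.mem_univ, true_and]
  constructor
  · rintro ⟨h1, h2⟩
    have sm : StrictMono g := by intro a b h; exact h1 a b h
    refine ⟨h1, perm3_unique _ _ ?_⟩
    intro i j
    exact (pat_spec p g sm.injective i j).trans (h2 i j).symm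
  · rintro ⟨h1, rfl⟩
    have sm : StrictMono g := by intro a b h; exact h1 a b h
    exact ⟨h1, pat_spec p g sm.injective⟩

/-- increasing triples of indices -/
def Inc3 (n : ℕ) : Finset (Fin 3 → Fin n) :=
  Finset.univ.filter (fun g => ∀ i j : Fin 3, i < j → g i < g j)

lemma Occ3_eq_filter {n : ℕ} (p : Equiv.Perm (Fin n)) (q : Equiv.Perm (Fin 3)) :
    Occ q p = (Inc3 n).filter (fun g => pat p g = q) := by
  ext g
  rw [mem_Occ3]
  simp [Inc3, Finset.mem_filter]

/-- number of non-inversions of a 3-pattern -/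
def noninv (q : Equiv.Perm (Fin 3)) : ℕ :=
  ((Finset.univ : Finset (Fin 3 × Fin 3)).filter
    (fun ij => ij.1 < ij.2 ∧ q ij.1 < q ij.2)).card

/-- non-inversion pairs of a triple under `p` -/
def pairs {n : ℕ} (p : Equiv.Perm (Fin n)) (g : Fin 3 → Fin n) : Finset (Fin 3 × Fin 3) :=
  (Finset.univ : Finset (Fin 3 × Fin 3)).filter
    (fun ij => ij.1 < ij.2 ∧ p (g ij.1) < p (g ij.2))

lemma count1 {n : ℕ} (p : Equiv.Perm (Fin n)) :
    ∑ g ∈ Inc3 n, (pairs p g).card = ∑ q : Equiv.Perm (Fin 3), noninv q * numOcc q p := by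
  rw [← Finset.sum_fiberwise (Inc3 n) (pat p) (fun g => (pairs p g).card)]
  refine Finset.sum_congr rfl ?_
  intro q _
  have hterm : ∀ g ∈ (Inc3 n).filter (fun g => pat p g = q), (pairs p g).card = noninv q := by
    intro g hg
    simp only [Finset.mem_filter, Inc3, Finset.mem_univ, true_and] at hg
    obtain ⟨hmono, hpat⟩ := hg
    have sm : StrictMono g := by intro a b h; exact hmono a b h
    have hiff : ∀ i j : Fin 3, p (g i) < p (g j) ↔ q i < q j := by
      intro i j
      rw [← hpat]
      exact (pat_spec p g sm.injective i j).symm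
    unfold pairs noninv
    congr 1
    apply Finset.filter_congr
    intro ij _
    rw [hiff]
  rw [Finset.sum_congr rfl hterm, Finset.sum_const, smul_eq_mul, mul_comm]
  congr 1
  rw [numOcc_eq_card_Occ, Occ3_eq_filter]

/-- the third index -/
def other (i j : Fin 3) : Fin 3 :=
  if i = 0 then (if j = 1 then 2 else 1) else 0

def toSig {n : ℕ} (x : (Fin 2 → Fin n) × Fin n) : Σ _ : Fin 3 → Fin n, Fin 3 × Fin 3 :=
  if x.2 < x.1 0 then ⟨![x.2, x.1 0, x.1 1], (1, 2)⟩
  else if x.2 < x.1 1 then ⟨![x.1 0, x.2, x.1 1], (0, 2)⟩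
  else ⟨![x.1 0, x.1 1, x.2], (0, 1)⟩

def toM {n : ℕ} (s : Σ _ : Fin 3 → Fin n, Fin 3 × Fin 3) : (Fin 2 → Fin n) × Fin n :=
  (![s.1 s.2.1, s.1 s.2.2], s.1 (other s.2.1 s.2.2))

/-- pairs-with-extra-point set -/
def MM {n : ℕ} (p : Equiv.Perm (Fin n)) : Finset ((Fin 2 → Fin n) × Fin n) :=
  Finset.univ.filter (fun x =>
    x.1 0 < x.1 1 ∧ p (x.1 0) < p (x.1 1) ∧ x.2 ≠ x.1 0 ∧ x.2 ≠ x.1 1)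

lemma mem_Occ12 {n : ℕ} (p : Equiv.Perm (Fin n)) (f : Fin 2 → Fin n) :
    f ∈ Occ p12 p ↔ (f 0 < f 1 ∧ p (f 0) < p (f 1)) := by
  simp only [Occ, Finset.mem_filter, Finset.mem_univ, true_and]
  constructor
  · rintro ⟨h1, h2⟩
    exact ⟨h1 0 1 (by decide), (h2 0 1).mp (by decide)⟩
  · rintro ⟨h1, h2⟩
    constructor
    · intro i j hij
      have h := hij
      rcases fin2_cases i j with ⟨rfl, rfl⟩ | ⟨rfl, rfl⟩ | ⟨rfl, rfl⟩ | ⟨rfl, rfl⟩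
      · exact absurd h (lt_irrefl _)
      · exact h1
      · exact absurd h (by decide)
      · exact absurd h (lt_irrefl _)
    · intro i j
      rcases fin2_cases i j with ⟨rfl, rfl⟩ | ⟨rfl, rfl⟩ | ⟨rfl, rfl⟩ | ⟨rfl, rfl⟩
      · exact iff_of_false (lt_irrefl _) (lt_irrefl _)
      · exact iff_of_true (by decide) h2
      · exact iff_of_false (by decide) (lt_asymm h2)
      · exact iff_of_false (lt_irrefl _) (lt_irrefl _)

lemma cardMM {n : ℕ} (p : Equiv.Perm (Fin n)) :
    (MM p).card = (n - 2) * numOcc p12 p := by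
  have hmem : ∀ x ∈ MM p, x.1 ∈ Occ p12 p := by
    intro x hx
    simp only [MM, Finset.mem_filter, Finset.mem_univ, true_and] at hx
    exact (mem_Occ12 p x.1).mpr ⟨hx.1, hx.2.1⟩
  rw [Finset.card_eq_sum_card_fiberwise hmem]
  have hfib : ∀ f ∈ Occ p12 p,
      ((MM p).filter (fun x => x.1 = f)).card = n - 2 := by
    intro f hf
    rw [mem_Occ12] at hf
    have hne : f 0 ≠ f 1 := ne_of_lt hf.1
    have hset : (MM p).filter (fun x => x.1 = f)
        = ({f} : Finset (Fin 2 → Fin n)) ×ˢ (Finset.univ \ {f 0, f 1}) := by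
      ext x
      simp only [MM, Finset.mem_filter, Finset.mem_univ, true_and, Finset.mem_product,
        Finset.mem_singleton, Finset.mem_sdiff, Finset.mem_insert]
      constructor
      · rintro ⟨⟨-, -, h3, h4⟩, rfl⟩
        tauto
      · rintro ⟨rfl, h⟩
        rw [not_or] at h
        exact ⟨⟨hf.1, hf.2, h.1, h.2⟩, rfl⟩
    rw [hset, Finset.card_product, Finset.card_singleton, one_mul,
      Finset.card_sdiff_of_subset (Finset.subset_univ _), Finset.card_univ, Fintype.card_fin]
    congr 1
    rw [Finset.card_insert_of_notMem (by simpa using hne), Finset.card_singleton]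
  rw [Finset.sum_congr rfl hfib, Finset.sum_const, smul_eq_mul, mul_comm,
    numOcc_eq_card_Occ]

lemma count2 {n : ℕ} (p : Equiv.Perm (Fin n)) :
    ∑ g ∈ Inc3 n, (pairs p g).card = (n - 2) * numOcc p12 p := by
  rw [← Finset.card_sigma, ← cardMM p]
  apply (Finset.card_bij' (fun x _ => toSig x) (fun s _ => toM s) ?_ ?_ ?_ ?_).symm
  · -- hi : toSig maps MM into the sigma set
    intro x hx
    simp only [MM, Finset.mem_filter, Finset.mem_univ, true_and] at hx
    obtain ⟨h01, hp01, hm0, hm1⟩ := hx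
    rw [Finset.mem_sigma]
    unfold toSig
    split_ifs with hc1 hc2
    · constructor
      · simp only [Inc3, Finset.mem_filter, Finset.mem_univ, true_and]
        intro i j hij
        rcases fin3_cases hij with ⟨rfl, rfl⟩ | ⟨rfl, rfl⟩ | ⟨rfl, rfl⟩
        · exact hc1
        · exact lt_trans hc1 h01
        · exact h01
      · simp only [pairs, Finset.mem_filter, Finset.mem_univ, true_and]
        exact ⟨by decide, hp01⟩
    · have h0m : x.1 0 < x.2 := lt_of_le_of_ne (not_lt.mp hc1) (Ne.symm hm0)
      constructor
      · simp only [Inc3, Finset.mem_filter, Finset.mem_univ, true_and]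
        intro i j hij
        rcases fin3_cases hij with ⟨rfl, rfl⟩ | ⟨rfl, rfl⟩ | ⟨rfl, rfl⟩
        · exact h0m
        · exact h01
        · exact hc2
      · simp only [pairs, Finset.mem_filter, Finset.mem_univ, true_and]
        exact ⟨by decide, hp01⟩
    · have h1m : x.1 1 < x.2 := lt_of_le_of_ne (not_lt.mp hc2) (Ne.symm hm1)
      constructor
      · simp only [Inc3, Finset.mem_filter, Finset.mem_univ, true_and]
        intro i j hij
        rcases fin3_cases hij with ⟨rfl, rfl⟩ | ⟨rfl, rfl⟩ | ⟨rfl, rfl⟩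
        · exact h01
        · exact lt_trans h01 h1m
        · exact h1m
      · simp only [pairs, Finset.mem_filter, Finset.mem_univ, true_and]
        exact ⟨by decide, hp01⟩
  · -- hj : toM maps the sigma set into MM
    rintro ⟨g, i, j⟩ hs
    rw [Finset.mem_sigma] at hs
    obtain ⟨hg, hij⟩ := hs
    simp only [Inc3, Finset.mem_filter, Finset.mem_univ, true_and] at hg
    simp only [pairs, Finset.mem_filter, Finset.mem_univ, true_and] at hij
    obtain ⟨hlt, hplt⟩ := hij
    simp only [MM, toM, Finset.mem_filter, Finset.mem_univ, true_and]
    refine ⟨hg _ _ hlt, hplt, ?_, ?_⟩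
    · rcases fin3_cases hlt with ⟨rfl, rfl⟩ | ⟨rfl, rfl⟩ | ⟨rfl, rfl⟩
      · exact ne_of_gt (hg 0 2 (by decide))
      · exact ne_of_gt (hg 0 1 (by decide))
      · exact ne_of_lt (hg 0 1 (by decide))
    · rcases fin3_cases hlt with ⟨rfl, rfl⟩ | ⟨rfl, rfl⟩ | ⟨rfl, rfl⟩
      · exact ne_of_gt (hg 1 2 (by decide))
      · exact ne_of_lt (hg 1 2 (by decide))
      · exact ne_of_lt (hg 0 2 (by decide))
  · -- left inverse
    intro x hx
    simp only [MM, Finset.mem_filter, Finset.mem_univ, true_and] at hx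
    obtain ⟨h01, hp01, hm0, hm1⟩ := hx
    unfold toSig
    split_ifs with hc1 hc2
    · show (![(![x.2, x.1 0, x.1 1] : Fin 3 → Fin n) 1,
        (![x.2, x.1 0, x.1 1] : Fin 3 → Fin n) 2],
        (![x.2, x.1 0, x.1 1] : Fin 3 → Fin n) (other 1 2)) = x
      have : other 1 2 = 0 := by decide
      rw [this]
      refine Prod.ext ?_ rfl
      funext t
      rcases (by revert t; decide : t = 0 ∨ t = 1) with rfl | rfl <;> rfl
    · show (![(![x.1 0, x.2, x.1 1] : Fin 3 → Fin n) 0,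
        (![x.1 0, x.2, x.1 1] : Fin 3 → Fin n) 2],
        (![x.1 0, x.2, x.1 1] : Fin 3 → Fin n) (other 0 2)) = x
      have : other 0 2 = 1 := by decide
      rw [this]
      refine Prod.ext ?_ rfl
      funext t
      rcases (by revert t; decide : t = 0 ∨ t = 1) with rfl | rfl <;> rfl
    · show (![(![x.1 0, x.1 1, x.2] : Fin 3 → Fin n) 0,
        (![x.1 0, x.1 1, x.2] : Fin 3 → Fin n) 1],
        (![x.1 0, x.1 1, x.2] : Fin 3 → Fin n) (other 0 1)) = x
      have : other 0 1 = 2 := by decide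
      rw [this]
      refine Prod.ext ?_ rfl
      funext t
      rcases (by revert t; decide : t = 0 ∨ t = 1) with rfl | rfl <;> rfl
  · -- right inverse
    rintro ⟨g, i, j⟩ hs
    rw [Finset.mem_sigma] at hs
    obtain ⟨hg, hij⟩ := hs
    simp only [Inc3, Finset.mem_filter, Finset.mem_univ, true_and] at hg
    simp only [pairs, Finset.mem_filter, Finset.mem_univ, true_and] at hij
    obtain ⟨hlt, -⟩ := hij
    have hgfun : ∀ a b c : Fin n, a = g 0 → b = g 1 → c = g 2 → ![a, b, c] = g := by
      rintro a b c rfl rfl rfl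
      funext t
      rcases (by revert t; decide : t = 0 ∨ t = 1 ∨ t = 2) with rfl | rfl | rfl <;> rfl
    rcases fin3_cases hlt with ⟨rfl, rfl⟩ | ⟨rfl, rfl⟩ | ⟨rfl, rfl⟩
    · -- (i,j) = (0,1), other = 2
      show toSig (![g 0, g 1], g (other 0 1)) = ⟨g, (0, 1)⟩
      have ho : other 0 1 = 2 := by decide
      rw [ho]
      unfold toSig
      have hx1 : ¬ (g 2 < (![g 0, g 1] : Fin 2 → Fin n) 0) := not_lt.mpr (le_of_lt (hg 0 2 (by decide)))
      have hx2 : ¬ (g 2 < (![g 0, g 1] : Fin 2 → Fin n) 1) := not_lt.mpr (le_of_lt (hg 1 2 (by decide)))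
      rw [if_neg hx1, if_neg hx2]
      have : (![(![g 0, g 1] : Fin 2 → Fin n) 0, (![g 0, g 1] : Fin 2 → Fin n) 1, g 2] : Fin 3 → Fin n) = g :=
        hgfun _ _ _ rfl rfl rfl
      rw [this]
    · -- (i,j) = (0,2), other = 1
      show toSig (![g 0, g 2], g (other 0 2)) = ⟨g, (0, 2)⟩
      have ho : other 0 2 = 1 := by decide
      rw [ho]
      unfold toSig
      have hx1 : ¬ (g 1 < (![g 0, g 2] : Fin 2 → Fin n) 0) := not_lt.mpr (le_of_lt (hg 0 1 (by decide)))
      have hx2 : g 1 < (![g 0, g 2] : Fin 2 → Fin n) 1 := hg 1 2 (by decide)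
      rw [if_neg hx1, if_pos hx2]
      have : (![(![g 0, g 2] : Fin 2 → Fin n) 0, g 1, (![g 0, g 2] : Fin 2 → Fin n) 1] : Fin 3 → Fin n) = g :=
        hgfun _ _ _ rfl rfl rfl
      rw [this]
    · -- (i,j) = (1,2), other = 0
      show toSig (![g 1, g 2], g (other 1 2)) = ⟨g, (1, 2)⟩
      have ho : other 1 2 = 0 := by decide
      rw [ho]
      unfold toSig
      have hx1 : g 0 < (![g 1, g 2] : Fin 2 → Fin n) 0 := hg 0 1 (by decide)
      rw [if_pos hx1]
      have : (![g 0, (![g 1, g 2] : Fin 2 → Fin n) 0, (![g 1, g 2] : Fin 2 → Fin n) 1] : Fin 3 → Fin n) = g :=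
        hgfun _ _ _ rfl rfl rfl
      rw [this]

lemma enumeration {n : ℕ} (p : Equiv.Perm (Fin n)) :
    ∑ q : Equiv.Perm (Fin 3), noninv q * numOcc q p =
      3 * numOcc p123 p + (2 * numOcc p132 p + 2 * numOcc p213 p
        + (numOcc p231 p + numOcc p312 p)) := by
  rw [show (Finset.univ : Finset (Equiv.Perm (Fin 3)))
      = insert p123 (insert p132 (insert p213 (insert p231 (insert p312 {p321}))))
    from by decide]
  rw [Finset.sum_insert (by decide), Finset.sum_insert (by decide),
    Finset.sum_insert (by decide), Finset.sum_insert (by decide),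
    Finset.sum_insert (by decide), Finset.sum_singleton]
  rw [show noninv p123 = 3 from by decide, show noninv p132 = 2 from by decide,
    show noninv p213 = 2 from by decide, show noninv p231 = 1 from by decide,
    show noninv p312 = 1 from by decide, show noninv p321 = 0 from by decide]
  ring

/-- Master pointwise identity. -/
lemma master {n : ℕ} (p : Equiv.Perm (Fin n)) :
    3 * numOcc p123 p + (2 * numOcc p132 p + 2 * numOcc p213 p
      + (numOcc p231 p + numOcc p312 p)) = (n - 2) * numOcc p12 p := by
  rw [← enumeration, ← count1, count2]

/- ===== reverse-complement symmetry ===== -/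

lemma rc_invol {m : ℕ} (q : Equiv.Perm (Fin m)) : rc (rc q) = q := by
  ext x
  simp [rc, Fin.rev_rev]

lemma numOcc_rc {k n : ℕ} (q : Equiv.Perm (Fin k)) (p : Equiv.Perm (Fin n)) :
    numOcc q p = numOcc (rc q) (rc p) := by
  rw [numOcc_eq_card_Occ, numOcc_eq_card_Occ]
  refine Finset.card_bij' (fun f _ => fun t : Fin k => (f t.rev).rev)
    (fun f _ => fun t : Fin k => (f t.rev).rev) ?_ ?_
    (fun f _ => by funext t; simp [Fin.rev_rev])
    (fun f _ => by funext t; simp [Fin.rev_rev])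
  · intro f hf
    simp only [Occ, Finset.mem_filter, Finset.mem_univ, true_and] at hf ⊢
    obtain ⟨h1, h2⟩ := hf
    constructor
    · intro i j hij
      exact Fin.rev_lt_rev.mpr (h1 _ _ (Fin.rev_lt_rev.mpr hij))
    · intro i j
      show rc q i < rc q j ↔ rc p ((f i.rev).rev) < rc p ((f j.rev).rev)
      simp only [rc, Equiv.trans_apply, Fin.revPerm_apply, Fin.rev_rev]
      rw [Fin.rev_lt_rev, Fin.rev_lt_rev]
      exact h2 j.rev i.rev
  · intro f hf
    simp only [Occ, Finset.mem_filter, Finset.mem_univ, true_and] at hf ⊢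
    obtain ⟨h1, h2⟩ := hf
    constructor
    · intro i j hij
      exact Fin.rev_lt_rev.mpr (h1 _ _ (Fin.rev_lt_rev.mpr hij))
    · intro i j
      have := h2 j.rev i.rev
      simp only [rc, Equiv.trans_apply, Fin.revPerm_apply, Fin.rev_rev] at this
      rw [Fin.rev_lt_rev] at this
      rw [this]
      exact Fin.rev_lt_rev

lemma rc_p123 : rc p123 = p123 := by decide
lemma rc_p132 : rc p132 = p213 := by decide
lemma rc_p231 : rc p231 = p312 := by decide

lemma mem_Av_rc {n : ℕ} (p : Equiv.Perm (Fin n)) (hp : p ∈ Av n p123) :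
    rc p ∈ Av n p123 := by
  simp only [Av, Finset.mem_filter, Finset.mem_univ, true_and] at hp ⊢
  rw [← rc_p123, ← numOcc_rc]
  exact hp

lemma nu_swap {n : ℕ} (q q' : Equiv.Perm (Fin 3)) (h : rc q = q') :
    nu q (Av n p123) = nu q' (Av n p123) := by
  unfold nu
  apply Finset.sum_bij' (fun p _ => rc p) (fun p _ => rc p)
    (fun p hp => mem_Av_rc p hp) (fun p hp => mem_Av_rc p hp)
    (fun p _ => rc_invol p) (fun p _ => rc_invol p)
  intro p _
  rw [numOcc_rc q p, h]

/-- For `n ≥ 2`, in `Av_n(123)`,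
`4·ν_132 + 2·ν_231 = (n-2)·ν_12`. -/
theorem stmt_8 (n : ℕ) (hn : 2 ≤ n) :
    4 * nu p132 (Av n p123) + 2 * nu p231 (Av n p123) =
      (n - 2) * nu p12 (Av n p123) := by
  have h132 : nu p132 (Av n p123) = nu p213 (Av n p123) := nu_swap _ _ rc_p132
  have h231 : nu p231 (Av n p123) = nu p312 (Av n p123) := nu_swap _ _ rc_p231
  have key : ∀ p ∈ Av n p123,
      2 * numOcc p132 p + 2 * numOcc p213 p + (numOcc p231 p + numOcc p312 p)
        = (n - 2) * numOcc p12 p := by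
    intro p hp
    have h0 : numOcc p123 p = 0 := by
      simpa [Av, Finset.mem_filter] using hp
    have := master p
    rw [h0] at this
    omega
  have hsum : ∑ p ∈ Av n p123,
      (2 * numOcc p132 p + 2 * numOcc p213 p + (numOcc p231 p + numOcc p312 p))
      = ∑ p ∈ Av n p123, (n - 2) * numOcc p12 p :=
    Finset.sum_congr rfl key
  have expand : ∑ p ∈ Av n p123,
      (2 * numOcc p132 p + 2 * numOcc p213 p + (numOcc p231 p + numOcc p312 p))
      = 2 * nu p132 (Av n p123) + 2 * nu p213 (Av n p123)
        + (nu p231 (Av n p123) + nu p312 (Av n p123)) := by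
    simp [nu, Finset.sum_add_distrib, Finset.mul_sum]
  have expand2 : ∑ p ∈ Av n p123, (n - 2) * numOcc p12 p
      = (n - 2) * nu p12 (Av n p123) := by
    simp [nu, Finset.mul_sum]
  calc 4 * nu p132 (Av n p123) + 2 * nu p231 (Av n p123)
      = 2 * nu p132 (Av n p123) + 2 * nu p213 (Av n p123)
        + (nu p231 (Av n p123) + nu p312 (Av n p123)) := by rw [← h132, ← h231]; ring
    _ = (n - 2) * nu p12 (Av n p123) := by rw [← expand, hsum, expand2]
end
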